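/- arXiv:2006.03000 — 4 statements merged into one kernel-verified Lean document; each statement's English description precedes it below -/
import Mathlib

section
/- Let A be a finite set partitioned into nonempty sets U and L, and S : A → ℝ with S(j) < 0 for all j ∈ L and S(i) ≥ 0 for all i ∈ U. Let S_max = max_{i∈U} S(i) and assume S_max > 0. For any δ ∈ (0,1) with δ·|L|/(1-δ) ≥ 1, if γ ≥ log(δ·|L|/(1-δ)) / S_max, then the softmax probabilities p(i) = exp(γ·S(i))/Σ_k exp(γ·S(k)) satisfy Σ_{i∈U} p(i) ≥ δ. -/
open Finset

theorem stmt3 {A : Type*} [Fintype A] [DecidableEq A]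
    (U L : Finset A) (hUL : U ∪ L = univ) (hdisj : Disjoint U L)
    (hLne : L.Nonempty) (hUne : U.Nonempty)
    (S : A → ℝ) (hSL : ∀ j ∈ L, S j < 0) (hSU : ∀ i ∈ U, 0 ≤ S i)
    (Smax : ℝ) (hSmax : Smax = U.sup' hUne S) (hSmaxpos : 0 < Smax)
    (δ : ℝ) (hδ : δ ∈ Set.Ioo (0 : ℝ) 1)
    (hratio : δ * (L.card : ℝ) / (1 - δ) ≥ 1)
    (γ : ℝ) (hγ : γ ≥ Real.log (δ * (L.card : ℝ) / (1 - δ)) / Smax)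
    (p : A → ℝ)
    (hp : ∀ i, p i = Real.exp (γ * S i) / ∑ k, Real.exp (γ * S k)) :
    ∑ i ∈ U, p i ≥ δ := by
  obtain ⟨hδ0, hδ1⟩ := hδ
  set r : ℝ := δ * (L.card : ℝ) / (1 - δ) with hr
  have hrpos : (0:ℝ) < r := lt_of_lt_of_le one_pos hratio
  have hγ0 : 0 ≤ γ := le_trans (div_nonneg (Real.log_nonneg hratio) hSmaxpos.le) hγ
  set T : ℝ := ∑ k, Real.exp (γ * S k) with hT
  have hsplit : T = ∑ k ∈ U, Real.exp (γ * S k) + ∑ k ∈ L, Real.exp (γ * S k) := by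
    rw [hT, ← Finset.sum_union hdisj, hUL]
  -- L sum ≤ |L|
  have hLsum : ∑ k ∈ L, Real.exp (γ * S k) ≤ (L.card : ℝ) := by
    calc ∑ k ∈ L, Real.exp (γ * S k) ≤ ∑ _k ∈ L, (1:ℝ) := by
          apply Finset.sum_le_sum
          intro j hj
          have : γ * S j ≤ 0 := mul_nonpos_of_nonneg_of_nonpos hγ0 (hSL j hj).le
          simpa using Real.exp_le_one_iff.mpr this
      _ = (L.card : ℝ) := by simp
  -- U sum ≥ exp(γ Smax) ≥ r
  obtain ⟨i0, hi0, hi0eq⟩ := Finset.exists_mem_eq_sup' hUne S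
  have hUsum : r ≤ ∑ k ∈ U, Real.exp (γ * S k) := by
    have h1 : Real.log r ≤ γ * Smax := by
      have := (div_le_iff₀ hSmaxpos).mp hγ
      linarith
    have h2 : r ≤ Real.exp (γ * Smax) := by
      calc r = Real.exp (Real.log r) := (Real.exp_log hrpos).symm
        _ ≤ Real.exp (γ * Smax) := Real.exp_le_exp.mpr h1
    refine h2.trans ?_
    have : Real.exp (γ * Smax) = Real.exp (γ * S i0) := by rw [hSmax, hi0eq]
    rw [this]
    exact Finset.single_le_sum (f := fun k => Real.exp (γ * S k)) (fun k _ => (Real.exp_pos _).le) hi0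
  have hTpos : 0 < T := by
    rw [hT]
    exact Finset.sum_pos (fun k _ => Real.exp_pos _) ⟨hUne.choose, Finset.mem_univ _⟩
  have hkey : δ * T ≤ ∑ k ∈ U, Real.exp (γ * S k) := by
    have hδ1' : 0 < 1 - δ := by linarith
    have h3 : δ * (L.card : ℝ) ≤ (1 - δ) * ∑ k ∈ U, Real.exp (γ * S k) := by
      have : δ * (L.card : ℝ) = (1 - δ) * r := by
        rw [hr]; field_simp [hδ1'.ne']
      rw [this]
      exact mul_le_mul_of_nonneg_left hUsum hδ1'.le
    have h4 : δ * ∑ k ∈ L, Real.exp (γ * S k) ≤ δ * (L.card : ℝ) :=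
      mul_le_mul_of_nonneg_left hLsum hδ0.le
    rw [hsplit]
    nlinarith
  have : ∑ i ∈ U, p i = (∑ k ∈ U, Real.exp (γ * S k)) / T := by
    simp only [hp, ← hT]
    rw [Finset.sum_div]
  rw [this, ge_iff_le, le_div_iff₀ hTpos]
  linarith [hkey]
end

section
/- Let μ, μ̂ : A → ℝ on a finite set A, β ≥ 0 and w : A → ℝ≥0 with |μ̂(i) - μ(i)| ≤ β·w(i) for all i. Let i★ be an arm achieving μ* = max_i μ(i), and let i* = argmax_i (μ̂(i) - β·w(i)). For any arm i with β·(w(i) + w(i*)) ≥ μ̂(i*) - μ̂(i) (i.e., S(i) ≥ 0), we have μ* - μ(i) ≤ 2β·(w(i★) + w(i)). -/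
theorem stmt7 {A : Type*} [Fintype A] [Nonempty A]
    (μ μhat : A → ℝ) (β : ℝ) (hβ : 0 ≤ β) (w : A → ℝ) (hw : ∀ i, 0 ≤ w i)
    (hconf : ∀ i, |μhat i - μ i| ≤ β * w i)
    (ibest : A) (hibest : ∀ j, μ j ≤ μ ibest)
    (istar : A) (histar : ∀ j, μhat j - β * w j ≤ μhat istar - β * w istar)
    (i : A) (hSi : β * (w i + w istar) ≥ μhat istar - μhat i) :
    μ ibest - μ i ≤ 2 * β * (w ibest + w i) := by
  have h1 := abs_le.mp (hconf ibest)
  have h2 := abs_le.mp (hconf i)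
  have h3 := histar ibest
  linarith [h1.1, h1.2, h2.1, h2.2]
end

section
/- Let μ, μ̂ : A → ℝ, β ≥ 0, w : A → ℝ≥0 with |μ̂(i) - μ(i)| ≤ β·w(i) for all i, and let ψ = max_i w(i). Let i* = argmax_i (μ̂(i) - β·w(i)). If arm i satisfies S(i) = β·(w(i)+w(i*)) - (μ̂(i*) - μ̂(i)) ≥ 0, then max_j μ(j) - μ(i) ≤ 4βψ. -/
open Finset

theorem stmt8 {A : Type*} [Fintype A] [Nonempty A]
    (μ μhat : A → ℝ) (β : ℝ) (hβ : 0 ≤ β) (w : A → ℝ) (hw : ∀ i, 0 ≤ w i)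
    (hconf : ∀ i, |μhat i - μ i| ≤ β * w i)
    (ψ : ℝ) (hψ : ψ = univ.sup' univ_nonempty w)
    (istar : A) (histar : ∀ j, μhat j - β * w j ≤ μhat istar - β * w istar)
    (i : A) (hSi : β * (w i + w istar) - (μhat istar - μhat i) ≥ 0) :
    univ.sup' univ_nonempty μ - μ i ≤ 4 * β * ψ := by
  obtain ⟨j, -, hj⟩ := exists_mem_eq_sup' univ_nonempty μ
  rw [hj]
  have hwψ : ∀ k : A, w k ≤ ψ := fun k => hψ ▸ le_sup' w (mem_univ k)
  have h1 := abs_le.mp (hconf j)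
  have h2 := abs_le.mp (hconf i)
  have h3 := histar j
  have hwj := hwψ j
  have hwi := hwψ i
  have hwis := hwψ istar
  have hβwj := mul_le_mul_of_nonneg_left hwj hβ
  have hβwi := mul_le_mul_of_nonneg_left hwi hβ
  have hβwis := mul_le_mul_of_nonneg_left hwis hβ
  nlinarith
end

section
/- Let x_1,...,x_T ∈ ℝ^d with ||x_t||₂ ≤ 1, α ≥ 1, and define V_0 = α·I, V_t = V_{t-1} + x_t x_tᵀ. Then Σ_{t=1}^T ||x_t||²_{V_{t-1}^{-1}} ≤ 2·log(det(V_T)/det(V_0)) ≤ 2d·log(1 + T/(αd)). -/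
open Matrix

-- elementary facts
private lemma dot_self_nonneg {d : ℕ} (z : Fin d → ℝ) : 0 ≤ z ⬝ᵥ z :=
  Finset.sum_nonneg fun i _ => mul_self_nonneg (z i)

private lemma dot_self_pos {d : ℕ} {z : Fin d → ℝ} (hz : z ≠ 0) : 0 < z ⬝ᵥ z := by
  obtain ⟨i, hi⟩ := Function.ne_iff.mp hz
  exact Finset.sum_pos' (fun j _ => mul_self_nonneg (z j))
    ⟨i, Finset.mem_univ i, mul_self_pos.mpr hi⟩

private lemma log_lb {u : ℝ} (hu0 : 0 ≤ u) (hu1 : u ≤ 1) : u ≤ 2 * Real.log (1 + u) := by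
  have h1 : (0:ℝ) < 1 + u := by linarith
  have hlog : Real.log (1/(1+u)) ≤ 1/(1+u) - 1 := Real.log_le_sub_one_of_pos (by positivity)
  rw [one_div, Real.log_inv] at hlog
  have h2 : (1+u) * (1+u)⁻¹ = 1 := mul_inv_cancel₀ h1.ne'
  nlinarith [hlog, h2, hu0, hu1, h1, mul_le_mul_of_nonneg_right hlog h1.le, sq_nonneg u]

theorem stmt11 (d T : ℕ) (hd : 0 < d) (α : ℝ) (hα : 1 ≤ α)
    (x : Fin T → (Fin d → ℝ)) (hx : ∀ t, x t ⬝ᵥ x t ≤ 1)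
    (V : ℕ → Matrix (Fin d) (Fin d) ℝ)
    (hV0 : V 0 = α • (1 : Matrix (Fin d) (Fin d) ℝ))
    (hVt : ∀ t : Fin T, V (t.val + 1) = V t.val + vecMulVec (x t) (x t)) :
    (∑ t : Fin T, x t ⬝ᵥ ((V t.val)⁻¹ *ᵥ x t)) ≤
        2 * Real.log ((V T).det / (V 0).det) ∧
      2 * Real.log ((V T).det / (V 0).det) ≤
        2 * (d : ℝ) * Real.log (1 + (T : ℝ) / (α * d)) := by
  classical
  have hα0 : (0:ℝ) < α := lt_of_lt_of_le one_pos hα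
  have hdR : (0:ℝ) < (d:ℝ) := by exact_mod_cast hd
  have hpsd : ∀ t : Fin T, (vecMulVec (x t) (x t)).PosSemidef := by
    intro t
    have h : vecMulVec (x t) (x t) = (replicateRow Unit (x t))ᴴ * replicateRow Unit (x t) := by
      rw [conjTranspose_replicateRow]
      simp [vecMulVec_eq Unit]
    rw [h]
    exact posSemidef_conjTranspose_mul_self _
  have key : ∀ n, n ≤ T → (V n).PosDef ∧ (V n).trace ≤ α * d + n ∧
      ∀ z : Fin d → ℝ, z ⬝ᵥ z ≤ z ⬝ᵥ (V n *ᵥ z) := by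
    intro n
    induction n with
    | zero =>
      intro _
      rw [hV0]
      refine ⟨posDef_iff_dotProduct_mulVec.mpr ⟨?_, ?_⟩, ?_, ?_⟩
      · rw [IsHermitian, conjTranspose_smul, conjTranspose_one, star_trivial]
      · intro z hz
        have : star z ⬝ᵥ ((α • (1:Matrix (Fin d) (Fin d) ℝ)) *ᵥ z) = α * (z ⬝ᵥ z) := by
          rw [smul_mulVec, one_mulVec, dotProduct_smul, star_trivial, smul_eq_mul]
        rw [this]
        exact mul_pos hα0 (dot_self_pos hz)
      · rw [trace_smul, trace_one, smul_eq_mul, Fintype.card_fin]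
        simp
      · intro z
        have : z ⬝ᵥ ((α • (1:Matrix (Fin d) (Fin d) ℝ)) *ᵥ z) = α * (z ⬝ᵥ z) := by
          rw [smul_mulVec, one_mulVec, dotProduct_smul, smul_eq_mul]
        rw [this]
        nlinarith [dot_self_nonneg z]
    | succ n ih =>
      intro hn
      have hnT : n < T := hn
      set t : Fin T := ⟨n, hnT⟩ with ht
      obtain ⟨hpd, htr, hquad⟩ := ih (le_of_lt hnT)
      have hVs : V (n+1) = V n + vecMulVec (x t) (x t) := hVt t
      refine ⟨?_, ?_, ?_⟩
      · rw [hVs]; exact hpd.add_posSemidef (hpsd t)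
      · rw [hVs, trace_add]
        have : (vecMulVec (x t) (x t)).trace = x t ⬝ᵥ x t := by
          rw [vecMulVec_eq Unit, trace_replicateCol_mul_replicateRow]
        rw [this]
        push_cast
        linarith [hx t]
      · intro z
        rw [hVs, add_mulVec, dotProduct_add]
        have h0 : 0 ≤ z ⬝ᵥ (vecMulVec (x t) (x t) *ᵥ z) := by
          have := (posSemidef_iff_dotProduct_mulVec.mp (hpsd t)).2 z
          rwa [star_trivial] at this
        linarith [hquad z]
  -- per-step quantities
  set u : Fin T → ℝ := fun t => x t ⬝ᵥ ((V t.val)⁻¹ *ᵥ x t) with hu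
  have hu0 : ∀ t, 0 ≤ u t := by
    intro t
    have hpd := (key t.val (le_of_lt t.isLt)).1
    have := (posSemidef_iff_dotProduct_mulVec.mp hpd.inv.posSemidef).2 (x t)
    rwa [star_trivial] at this
  have hu1 : ∀ t, u t ≤ 1 := by
    intro t
    have hpd := (key t.val (le_of_lt t.isLt)).1
    have hquad := (key t.val (le_of_lt t.isLt)).2.2
    set z := x t
    set w := (V t.val)⁻¹ *ᵥ z with hw
    have hMw : V t.val *ᵥ w = z := by
      rw [hw, mulVec_mulVec, mul_nonsing_inv _ hpd.det_pos.ne'.isUnit, one_mulVec]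
    have h1 : w ⬝ᵥ w ≤ w ⬝ᵥ z := by
      have := hquad w
      rwa [hMw] at this
    have hcs : (z ⬝ᵥ w)^2 ≤ (z ⬝ᵥ z) * (w ⬝ᵥ w) := by
      simpa [dotProduct, pow_two] using Finset.sum_mul_sq_le_sq_mul_sq Finset.univ z w
    have hwz : w ⬝ᵥ z = z ⬝ᵥ w := dotProduct_comm _ _
    have hz1 : z ⬝ᵥ z ≤ 1 := hx t
    have hzn : 0 ≤ z ⬝ᵥ z := dot_self_nonneg z
    have hwn : 0 ≤ w ⬝ᵥ w := dot_self_nonneg w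
    have hs0 : 0 ≤ z ⬝ᵥ w := hu0 t
    nlinarith [hcs, h1, hwz, hz1, hzn, hwn, hs0]
  have hdet : ∀ t : Fin T, (V (t.val+1)).det = (V t.val).det * (1 + u t) := by
    intro t
    have hpd := (key t.val (le_of_lt t.isLt)).1
    rw [hVt t, vecMulVec_eq Unit, det_add_replicateCol_mul_replicateRow hpd.det_pos.ne'.isUnit]
    congr 1
    rw [det_unique, Matrix.add_apply, Matrix.one_apply_eq]
    congr 1
    rw [← replicateRow_vecMul, replicateRow_mul_replicateCol_apply, ← dotProduct_mulVec]
  have hdetpos : ∀ n, n ≤ T → 0 < (V n).det := fun n hn => (key n hn).1.det_pos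
  set f : ℕ → ℝ := fun n => if h : n < T then Real.log (1 + u ⟨n, h⟩) else 0 with hf
  have htel : ∀ n, n ≤ T →
      Real.log ((V n).det) = Real.log ((V 0).det) + ∑ k ∈ Finset.range n, f k := by
    intro n
    induction n with
    | zero => intro _; simp
    | succ n ih =>
      intro hn
      have hnT : n < T := hn
      rw [Finset.sum_range_succ, ← add_assoc, ← ih (le_of_lt hnT)]
      have hfn : f n = Real.log (1 + u ⟨n, hnT⟩) := dif_pos hnT
      rw [hfn, hdet ⟨n, hnT⟩,
        Real.log_mul (hdetpos n (le_of_lt hnT)).ne'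
          (by nlinarith [hu0 ⟨n, hnT⟩] : (0:ℝ) < 1 + u ⟨n, hnT⟩).ne']
  have hsum : ∑ t : Fin T, Real.log (1 + u t)
      = Real.log ((V T).det) - Real.log ((V 0).det) := by
    rw [htel T le_rfl, ← Fin.sum_univ_eq_sum_range f T]
    have : ∀ t : Fin T, f t.val = Real.log (1 + u t) := by
      intro t
      simp [hf, t.isLt]
    rw [Finset.sum_congr rfl fun t _ => this t]
    ring
  have hfirst : (∑ t : Fin T, u t) ≤ 2 * Real.log ((V T).det / (V 0).det) := by
    rw [Real.log_div (hdetpos T le_rfl).ne' (hdetpos 0 (Nat.zero_le _)).ne']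
    calc ∑ t : Fin T, u t ≤ ∑ t : Fin T, 2 * Real.log (1 + u t) :=
          Finset.sum_le_sum fun t _ => log_lb (hu0 t) (hu1 t)
      _ = 2 * (Real.log ((V T).det) - Real.log ((V 0).det)) := by
          rw [← Finset.mul_sum, hsum]
  -- second inequality
  have hpdT := (key T le_rfl).1
  have hH : (V T).IsHermitian := hpdT.isHermitian
  set lam : Fin d → ℝ := hH.eigenvalues with hlam
  have hlampos : ∀ i, 0 < lam i := fun i => hpdT.eigenvalues_pos i
  have hdetT : (V T).det = ∏ i, lam i := by
    simpa using hH.det_eq_prod_eigenvalues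
  have htrT : (V T).trace = ∑ i, lam i := by
    nth_rewrite 1 [hH.spectral_theorem]
    rw [Unitary.conjStarAlgAut_apply, trace_mul_cycle]
    simp [trace_diagonal, Unitary.coe_star_mul_self, hlam]
  have hS : 0 < ∑ i, lam i :=
    Finset.sum_pos (fun i _ => hlampos i) ⟨⟨0, hd⟩, Finset.mem_univ _⟩
  have hamgm : (V T).det ≤ ((∑ i, lam i) / d) ^ (d:ℝ) := by
    have hw : ∑ _i : Fin d, ((d:ℝ)⁻¹) = 1 := by
      rw [Finset.sum_const, Finset.card_univ, Fintype.card_fin, nsmul_eq_mul,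
        mul_inv_cancel₀ hdR.ne']
    have h := Real.geom_mean_le_arith_mean_weighted Finset.univ (fun _ => (d:ℝ)⁻¹) lam
      (fun i _ => by positivity) hw (fun i _ => (hlampos i).le)
    have hprod : ∏ i, lam i ^ ((d:ℝ)⁻¹) = (∏ i, lam i) ^ ((d:ℝ)⁻¹) :=
      Real.finset_prod_rpow Finset.univ lam (fun i _ => (hlampos i).le) _
    rw [hprod] at h
    have h2 := Real.rpow_le_rpow (Real.rpow_nonneg (Finset.prod_nonneg
      fun i _ => (hlampos i).le) _) h (le_of_lt hdR)
    rw [← Real.rpow_mul (Finset.prod_nonneg fun i _ => (hlampos i).le),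
      inv_mul_cancel₀ hdR.ne', Real.rpow_one] at h2
    rw [hdetT]
    calc ∏ i, lam i ≤ (∑ i, (d:ℝ)⁻¹ * lam i) ^ ((d:ℕ):ℝ) := h2
      _ = ((∑ i, lam i) / d) ^ (d:ℝ) := by
          rw [← Finset.mul_sum]
          congr 1
          field_simp
  have hlogdetT : Real.log ((V T).det) ≤ (d:ℝ) * Real.log ((α*d + T)/d) := by
    have htrle : ∑ i, lam i ≤ α * d + T := htrT ▸ (key T le_rfl).2.1
    have h3 : ((∑ i, lam i) / d) ≤ (α*d + T)/d := by gcongr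
    have h4 : Real.log ((V T).det) ≤ Real.log (((∑ i, lam i) / d) ^ (d:ℝ)) :=
      Real.log_le_log (hdetpos T le_rfl) hamgm
    rw [Real.log_rpow (by positivity)] at h4
    have h5 : Real.log ((∑ i, lam i) / d) ≤ Real.log ((α*d + T)/d) :=
      Real.log_le_log (by positivity) h3
    nlinarith [h4, h5, hdR]
  have hlog0 : Real.log ((V 0).det) = (d:ℝ) * Real.log α := by
    rw [hV0, det_smul, det_one, mul_one, Fintype.card_fin, Real.log_pow]
  refine ⟨hfirst, ?_⟩
  rw [Real.log_div (hdetpos T le_rfl).ne' (hdetpos 0 (Nat.zero_le _)).ne']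
  have heq : Real.log (1 + (T:ℝ)/(α*d)) = Real.log ((α*d + T)/d) - Real.log α := by
    rw [← Real.log_div (by positivity) hα0.ne']
    congr 1
    rw [div_div, mul_comm (d:ℝ) α, add_div, div_self (by positivity : α*(d:ℝ) ≠ 0)]
  rw [heq]
  nlinarith [hlogdetT, hlog0, hdR]
end
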